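/- arXiv:1802.05623 — 2 statements merged into one kernel-verified Lean document; each statement's English description precedes it below -/
import Mathlib

section
/- For every vertex v and every i ∈ ℕ such that D_v(0, i + 1) ≤ k_v, the weight of v at consecutive levels satisfies the sharper bound W_v(i) ≤ β·W_v(i + 1). -/
open scoped Classical

/-- `D_v(i)`: the number of neighbors of `v` whose level equals `i`. -/
noncomputable def levelCount {V : Type*} [Fintype V] (G : SimpleGraph V)
    (ℓ : V → ℕ) (v : V) (i : ℕ) : ℕ :=
  (Finset.univ.filter fun u => G.Adj v u ∧ ℓ u = i).card

/-- `D_v(i, j)`: the number of neighbors of `v` whose level lies in `[i, j]`. -/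
noncomputable def levelCountRange {V : Type*} [Fintype V] (G : SimpleGraph V)
    (ℓ : V → ℕ) (v : V) (i j : ℕ) : ℕ :=
  (Finset.univ.filter fun u => G.Adj v u ∧ i ≤ ℓ u ∧ ℓ u ≤ j).card

/-- The weight of a vertex `v`:
`W_v = min{k_v, D_v(0, ℓ(v))}·μ·β^(−ℓ(v)) + Σ_{i > ℓ(v)} min{k_v, D_v(i)}·μ·β^(−i)`. -/
noncomputable def vertexWeight {V : Type*} [Fintype V] (G : SimpleGraph V)
    (β μ : ℝ) (k : V → ℕ) (ℓ : V → ℕ) (v : V) : ℝ :=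
  (min (k v) (levelCountRange G ℓ v 0 (ℓ v)) : ℝ) * μ * β ^ (-(ℓ v : ℤ))
    + ∑' i : ℕ, if ℓ v < i then (min (k v) (levelCount G ℓ v i) : ℝ) * μ * β ^ (-(i : ℤ)) else 0


/-! Lowering `v` from level `i + 1` to `i` moves its neighbours at level `i + 1` from the tail
sum into the block at `v`'s own level, whose factor `β^(-i)` is `β` times the factor
`β^(-(i + 1))` of that block in `W_v(i + 1)`. As `D_v(0, i + 1) ≤ k_v`, the cap is inactive
there, so `β·W_v(i + 1) = D_v(0, i + 1)·μ·β^(-i) + β·T`, where `T ≥ 0` is the tail over levels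
above `i + 1`; while `W_v(i)` is at most `D_v(0, i)·μ·β^(-i) + D_v(i + 1)·μ·β^(-(i + 1)) + T`. -/

theorem tsum_ite_lt_eq_add {α : Type*} [AddCommGroup α] [TopologicalSpace α]
    [IsTopologicalAddGroup α] [T2Space α] {f : ℕ → α} {i : ℕ}
    (hf : Summable fun j => if i < j then f j else 0) :
    ∑' j, (if i < j then f j else 0) = f (i + 1) + ∑' j, if i + 1 < j then f j else 0 := by
  rw [hf.tsum_eq_add_tsum_ite (i + 1), if_pos i.lt_succ_self]
  congr 1
  refine tsum_congr fun j => ?_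
  split_ifs <;> first | rfl | omega

noncomputable def levelContribution {V : Type*} [Fintype V] (G : SimpleGraph V)
    (β μ : ℝ) (k : V → ℕ) (ℓ : V → ℕ) (v : V) (j : ℕ) : ℝ :=
  (min (k v) (levelCount G ℓ v j) : ℝ) * μ * β ^ (-(j : ℤ))

section LevelCounts

variable {V : Type*} [Fintype V] (G : SimpleGraph V) (ℓ : V → ℕ) (v : V)

lemma levelCount_update_self (x j : ℕ) :
    levelCount G (Function.update ℓ v x) v j = levelCount G ℓ v j := by
  unfold levelCount
  congr 1
  refine Finset.filter_congr fun u _ => and_congr_right fun huv => ?_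
  rw [Function.update_of_ne (G.ne_of_adj huv).symm]

lemma levelCountRange_update_self (x a b : ℕ) :
    levelCountRange G (Function.update ℓ v x) v a b = levelCountRange G ℓ v a b := by
  unfold levelCountRange
  congr 1
  refine Finset.filter_congr fun u _ => and_congr_right fun huv => ?_
  rw [Function.update_of_ne (G.ne_of_adj huv).symm]

lemma levelCountRange_zero_succ (i : ℕ) :
    levelCountRange G ℓ v 0 (i + 1) = levelCountRange G ℓ v 0 i + levelCount G ℓ v (i + 1) := by
  unfold levelCountRange levelCount
  rw [← Finset.card_union_of_disjoint]
  · congr 1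
    ext u
    simp only [Finset.mem_filter, Finset.mem_union, Finset.mem_univ, true_and, zero_le,
      ← and_or_left]
    exact and_congr_right fun _ => by omega
  · exact Finset.disjoint_filter.2 fun u _ h h' => by omega

lemma levelCount_eq_zero_of_notMem_range {j : ℕ} (hj : j ∉ Set.range ℓ) :
    levelCount G ℓ v j = 0 := by
  unfold levelCount
  simp only [Finset.card_eq_zero, Finset.filter_eq_empty_iff]
  exact fun u _ h => hj ⟨u, h.2⟩

variable {β μ : ℝ} (k : V → ℕ)

lemma levelContribution_nonneg (hβ : 0 ≤ β) (hμ : 0 ≤ μ) (j : ℕ) :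
    0 ≤ levelContribution G β μ k ℓ v j := by
  unfold levelContribution; positivity

lemma levelContribution_succ_le (hβ : 1 ≤ β) (hμ : 0 ≤ μ) (j : ℕ) :
    levelContribution G β μ k ℓ v (j + 1) ≤ levelCount G ℓ v (j + 1) * μ * β ^ (-(j : ℤ)) := by
  unfold levelContribution
  gcongr
  · exact min_le_right _ _
  · omega

lemma vertexWeight_update_self (x : ℕ) :
    vertexWeight G β μ k (Function.update ℓ v x) v =
      (min (k v) (levelCountRange G ℓ v 0 x) : ℝ) * μ * β ^ (-(x : ℤ))
        + ∑' j, if x < j then levelContribution G β μ k ℓ v j else 0 := by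
  simp only [vertexWeight, levelContribution, Function.update_self, levelCount_update_self,
    levelCountRange_update_self]

lemma summable_levelContribution_tail (x : ℕ) :
    Summable fun j => if x < j then levelContribution G β μ k ℓ v j else 0 := by
  refine summable_of_hasFiniteSupport <| (Set.finite_range ℓ).subset fun j hj => ?_
  by_contra hjℓ
  simp [levelContribution, levelCount_eq_zero_of_notMem_range G ℓ v hjℓ] at hj

end LevelCounts

theorem weight_consecutive_levels_sharp_general {V : Type*} [Fintype V] (G : SimpleGraph V)
    (c : V → ℝ) (k : V → ℕ) (β μ : ℝ) (ℓ : V → ℕ)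
    (hc : ∀ v, 0 < c v) (hβ : 1 < β) (hμ : ∀ v, c v < μ) :
    ∀ (v : V) (i : ℕ), levelCountRange G ℓ v 0 (i + 1) ≤ k v →
      vertexWeight G β μ k (Function.update ℓ v i) v
        ≤ β * vertexWeight G β μ k (Function.update ℓ v (i + 1)) v := by
  intro v i hcap
  have hμ0 : 0 ≤ μ := ((hc v).trans (hμ v)).le
  have hpow : β ^ (-(i : ℤ)) = β * β ^ (-((i + 1 : ℕ) : ℤ)) := by
    rw [← zpow_one_add₀ (by positivity)]; push_cast; ring_nf
  have hB : (min (k v) (levelCountRange G ℓ v 0 (i + 1)) : ℝ) = levelCountRange G ℓ v 0 (i + 1) :=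
    min_eq_right (by exact_mod_cast hcap)
  have hnext := levelContribution_succ_le G ℓ v k hβ.le hμ0 i
  rw [hpow] at hnext
  rw [vertexWeight_update_self, vertexWeight_update_self,
    tsum_ite_lt_eq_add (summable_levelContribution_tail G ℓ v k i), hB,
    levelCountRange_zero_succ, hpow]
  set p := β ^ (-((i + 1 : ℕ) : ℤ))
  set T := ∑' j, if i + 1 < j then levelContribution G β μ k ℓ v j else 0
  have hT : T ≤ β * T := le_mul_of_one_le_left (tsum_nonneg fun j =>
    ite_nonneg (levelContribution_nonneg G ℓ v k (by positivity) hμ0 j) le_rfl) hβ.le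
  have hA : (min (k v) (levelCountRange G ℓ v 0 i) : ℝ) * μ * (β * p)
      ≤ levelCountRange G ℓ v 0 i * μ * (β * p) := by
    have : 0 ≤ p := zpow_nonneg (by positivity) _
    gcongr
    exact min_le_right _ _
  push_cast
  linarith

/-- For every vertex `v` and every `i ∈ ℕ` with `D_v(0, i + 1) ≤ k_v`, the weight of `v` at
consecutive levels satisfies the sharper bound `W_v(i) ≤ β·W_v(i + 1)`. -/
theorem weight_consecutive_levels_sharp {V : Type*} [Fintype V] (G : SimpleGraph V)
    (c : V → ℝ) (k : V → ℕ) (β μ : ℝ) (ℓ : V → ℕ)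
    (hc : ∀ v, 0 < c v) (hk : ∀ v, 1 ≤ k v) (hβ : 1 < β) (hμ : ∀ v, c v < μ) :
    ∀ (v : V) (i : ℕ), levelCountRange G ℓ v 0 (i + 1) ≤ k v →
      vertexWeight G β μ k (Function.update ℓ v i) v
        ≤ β * vertexWeight G β μ k (Function.update ℓ v (i + 1)) v :=
  weight_consecutive_levels_sharp_general G c k β μ ℓ hc hβ hμ
end

section
/- Let ε ≥ 1 and let an ε-tight valid level scheme on G with consistent edge assignment δ be given. Then for every feasible integral capacitated vertex cover (x, y) of G, Σ_{v : δ(v) ≠ ∅} ⌈|δ(v)|/k_v⌉·c_v ≤ ε·(2β/(β − 1) + 1)·Σ_{v ∈ V} c_v·x_v; in other words, selecting ⌈|δ(v)|/k_v⌉ copies of each vertex with δ(v) ≠ ∅ yields an ε·(2β/(β − 1) + 1)-approximate weighted minimum capacitated vertex cover. -/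
open scoped Classical

/-- The level of an edge: the maximum of the levels of its endpoints. -/
noncomputable def edgeLevel {V : Type*} (ℓ : V → ℕ) : Sym2 V → ℕ :=
  Sym2.lift ⟨fun a b => max (ℓ a) (ℓ b), fun a b => max_comm _ _⟩

/-- `|δ(v)|`: the number of edges assigned to `v` by the edge assignment `A`,
where `A u v` means that the edge `{u, v}` is assigned to its endpoint `v`. -/
noncomputable def assignedCount {V : Type*} [Fintype V] (G : SimpleGraph V)
    (A : V → V → Prop) (v : V) : ℕ :=
  (Finset.univ.filter fun u => G.Adj v u ∧ A u v).card

/-!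
Give each edge `e` the weight `w_e = μ·β^(−ℓ(e))`. Grouping the neighbours of `v` by the level
of the joining edge writes `W_v` as `Σ_{i ≥ ℓ(v)} min{k_v, #(edges at v of level i)}·μ·β^(−i)`.
Hence `W_v ≤ Σ_{e ∋ v} w_e`; `W_v ≤ β/(β−1)·k_v·μ·β^(−ℓ(v))` by a geometric series; and any
`y` with `y_{ev} ≤ 1`, `Σ_e y_{ev} ≤ k_v x_v` has `Σ_e y_{ev} w_e ≤ x_v W_v ≤ x_v c_v`, since
`v` covers at most `min{k_v x_v, #} ≤ x_v·min{k_v, #}` of its edges of each level.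

Every edge of `δ(v)` has weight `μ·β^(−ℓ(v))`, so tightness and the first two bounds give
`⌈|δ(v)|/k_v⌉·c_v ≤ ε·(β/(β−1)·Σ_{e ∈ δ(v)} w_e + Σ_{e ∋ v} w_e)`. Summed over `v`, the first
sum counts each edge once and the second twice, and as `y` covers every edge both are dominated
by `Σ_v Σ_{e ∋ v} y_{ev} w_e ≤ Σ_v c_v x_v`.
-/

open Finset

section CappedSums

variable {α ι : Type*} [DecidableEq ι] {s : Finset α} {t : Finset ι} {b : α → ι} {f : ι → ℝ}
  {g : α → ℕ} {k x : ℕ}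

lemma min_mul_le_mul_min (k x D : ℕ) : min (k * x) D ≤ x * min k D := by
  rcases Nat.eq_zero_or_pos x with rfl | hx
  · simp
  calc min (k * x) D ≤ min (k * x) (D * x) := min_le_min_left _ (Nat.le_mul_of_pos_right D hx)
    _ = x * min k D := by rw [min_mul_mul_right, mul_comm]

lemma sum_le_mul_min_card (hg : ∀ u ∈ s, g u ≤ 1) (hgk : ∑ u ∈ s, g u ≤ k * x) :
    ∑ u ∈ s, g u ≤ x * min k #s :=
  (le_min hgk (by simpa using sum_le_card_nsmul s g 1 hg)).trans (min_mul_le_mul_min k x #s)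

lemma sum_mul_le_mul_sum_min_card (hb : ∀ u ∈ s, b u ∈ t) (hf : ∀ i ∈ t, 0 ≤ f i)
    (hg : ∀ u ∈ s, g u ≤ 1) (hgk : ∑ u ∈ s, g u ≤ k * x) :
    ∑ u ∈ s, (g u : ℝ) * f (b u) ≤ x * ∑ i ∈ t, (min k #{u ∈ s | b u = i} : ℝ) * f i := by
  rw [← sum_fiberwise_of_maps_to hb, mul_sum]
  refine sum_le_sum fun i hi => ?_
  have hfiber : ∑ u ∈ s with b u = i, g u ≤ x * min k #{u ∈ s | b u = i} :=
    sum_le_mul_min_card (fun u hu => hg u (mem_filter.1 hu).1)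
      ((sum_le_sum_of_subset (filter_subset _ _)).trans hgk)
  calc ∑ u ∈ s with b u = i, (g u : ℝ) * f (b u)
      = ((∑ u ∈ s with b u = i, g u : ℕ) : ℝ) * f i := by
        rw [Nat.cast_sum, sum_mul]
        exact sum_congr rfl fun u hu => by rw [(mem_filter.1 hu).2]
    _ ≤ ((x * min k #{u ∈ s | b u = i} : ℕ) : ℝ) * f i := by gcongr; exact hf i hi
    _ = x * ((min k #{u ∈ s | b u = i} : ℝ) * f i) := by push_cast; ring

lemma sum_min_card_mul_le_sum (hb : ∀ u ∈ s, b u ∈ t) (hf : ∀ i ∈ t, 0 ≤ f i) :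
    ∑ i ∈ t, (min k #{u ∈ s | b u = i} : ℝ) * f i ≤ ∑ u ∈ s, f (b u) := by
  rw [← sum_fiberwise_of_maps_to hb]
  refine sum_le_sum fun i hi => ?_
  calc (min k #{u ∈ s | b u = i} : ℝ) * f i ≤ #{u ∈ s | b u = i} * f i := by
        gcongr
        · exact hf i hi
        · exact min_le_right _ _
    _ = ∑ u ∈ s with b u = i, f (b u) := by
        rw [← nsmul_eq_mul, ← sum_const]
        exact sum_congr rfl fun u hu => by rw [(mem_filter.1 hu).2]

end CappedSums

lemma sum_sum_le_of_add_swap_le {V : Type*} [Fintype V] {F H : V → V → ℝ}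
    (h : ∀ u v, F u v + F v u ≤ H u v + H v u) : ∑ u, ∑ v, F u v ≤ ∑ u, ∑ v, H u v := by
  have hsum := sum_le_sum fun u (_ : u ∈ univ) => sum_le_sum fun v (_ : v ∈ univ) => h u v
  simp only [sum_add_distrib] at hsum
  rw [sum_comm (f := fun u v => F v u), sum_comm (f := fun u v => H v u)] at hsum
  linarith

lemma natCeil_div_mul_le {a κ c ε W B X S : ℝ} (ha : 0 ≤ a) (hκ : 0 < κ) (hc : 0 ≤ c)
    (hε : 0 < ε) (hcW : c / ε < W) (hWB : W ≤ B * (κ * X)) (hWS : W ≤ S) :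
    ⌈a / κ⌉₊ * c ≤ ε * (B * (a * X) + S) := by
  have hc' : c ≤ ε * W := by rw [div_lt_iff₀ hε] at hcW; linarith
  calc ⌈a / κ⌉₊ * c ≤ (a / κ + 1) * (ε * W) := by
        gcongr
        exact (Nat.ceil_lt_add_one (by positivity)).le
    _ = ε * (a / κ * W + W) := by ring
    _ ≤ ε * (a / κ * (B * (κ * X)) + S) := by gcongr
    _ = ε * (B * (a * X) + S) := by field_simp

section LevelScheme

variable {V : Type*} (β μ : ℝ) (ℓ : V → ℕ)

lemma edgeLevel_mk (u v : V) : edgeLevel ℓ s(u, v) = max (ℓ u) (ℓ v) := rfl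

noncomputable def edgeWeight (e : Sym2 V) : ℝ := μ * β ^ (-(edgeLevel ℓ e : ℤ))

variable {β μ}

lemma edgeWeight_nonneg (hβ : 0 < β) (hμ : 0 ≤ μ) (e : Sym2 V) : 0 ≤ edgeWeight β μ ℓ e := by
  unfold edgeWeight; positivity

lemma edgeLevel_mem_Ico {N : ℕ} (hN : ∀ u, ℓ u ≤ N) (v u : V) :
    edgeLevel ℓ s(v, u) ∈ Ico (ℓ v) (N + 1) := by
  rw [edgeLevel_mk, mem_Ico]
  exact ⟨le_max_left _ _, Nat.lt_succ_of_le (max_le (hN v) (hN u))⟩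

variable [Fintype V] (G : SimpleGraph V) (k : V → ℕ)

/-- Grouping the neighbours of `v` by the level of the joining edge: the bucket `ℓ(v)` holds the
`D_v(0, ℓ(v))` neighbours of level at most `ℓ(v)`, a bucket `i > ℓ(v)` the `D_v(i)` neighbours of
level `i`. -/
lemma card_adj_edgeLevel_eq (v : V) (i : ℕ) :
    #{u ∈ univ.filter fun u => G.Adj v u | edgeLevel ℓ s(v, u) = i} =
      if i = ℓ v then levelCountRange G ℓ v 0 (ℓ v)
      else if ℓ v < i then levelCount G ℓ v i else 0 := by
  unfold levelCountRange levelCount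
  rw [filter_filter]
  split_ifs with h₁ h₂
  pick_goal 3
  · rw [card_eq_zero, filter_eq_empty_iff]
    intro u _
    rw [edgeLevel_mk]
    omega
  all_goals
    congr 1; ext u
    simp only [mem_filter, mem_univ, true_and]
    rw [edgeLevel_mk]
    exact and_congr_right fun _ => by omega

lemma vertexWeight_eq_sum_Ico {N : ℕ} (hN : ∀ u, ℓ u ≤ N) (v : V) :
    vertexWeight G β μ k ℓ v = ∑ i ∈ Ico (ℓ v) (N + 1),
      (min (k v) #{u ∈ univ.filter fun u => G.Adj v u | edgeLevel ℓ s(v, u) = i} : ℝ) *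
        (μ * β ^ (-(i : ℤ))) := by
  rw [sum_eq_sum_Ico_succ_bot (Nat.lt_succ_of_le (hN v)), vertexWeight,
    tsum_eq_sum (s := Ico (ℓ v + 1) (N + 1))]
  · rw [card_adj_edgeLevel_eq, if_pos rfl, mul_assoc]
    congr 1
    refine sum_congr rfl fun i hi => ?_
    have hi : ℓ v < i := by simp only [mem_Ico] at hi; omega
    rw [if_pos hi, card_adj_edgeLevel_eq, if_neg hi.ne', if_pos hi, mul_assoc]
  · intro i hi
    split_ifs with hlt
    · have hempty : levelCount G ℓ v i = 0 := by
        rw [levelCount, card_eq_zero, filter_eq_empty_iff]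
        intro u _ hu
        simp only [mem_Ico] at hi
        have := hN u
        omega
      simp [hempty]
    · rfl

lemma vertexWeight_le_mul_zpow (hβ : 1 < β) (hμ : 0 ≤ μ) (v : V) :
    vertexWeight G β μ k ℓ v ≤ β / (β - 1) * (k v * (μ * β ^ (-(ℓ v : ℤ)))) := by
  have hβ₀ : 0 < β := by linarith
  have hzpow : ∀ i : ℕ, β ^ (-(i : ℤ)) = β⁻¹ ^ i := fun i => by
    rw [zpow_neg, zpow_natCast, inv_pow]
  rw [vertexWeight_eq_sum_Ico ℓ G k (N := univ.sup ℓ) (fun u => le_sup (mem_univ u))]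
  calc ∑ i ∈ Ico (ℓ v) (univ.sup ℓ + 1),
        (min (k v) #{u ∈ univ.filter fun u => G.Adj v u | edgeLevel ℓ s(v, u) = i} : ℝ) *
          (μ * β ^ (-(i : ℤ)))
      ≤ ∑ i ∈ Ico (ℓ v) (univ.sup ℓ + 1), (k v : ℝ) * (μ * β ^ (-(i : ℤ))) := by
        gcongr
        exact min_le_left _ _
    _ = k v * μ * ∑ i ∈ Ico (ℓ v) (univ.sup ℓ + 1), β⁻¹ ^ i := by
        simp only [hzpow, mul_sum, mul_assoc]
    _ ≤ k v * μ * (β⁻¹ ^ ℓ v / (1 - β⁻¹)) := by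
        gcongr
        exact geom_sum_Ico_le_of_lt_one (by positivity) (inv_lt_one_of_one_lt₀ hβ)
    _ = β / (β - 1) * (k v * (μ * β ^ (-(ℓ v : ℤ)))) := by
        rw [hzpow]
        have : β - 1 ≠ 0 := by linarith
        field_simp

lemma vertexWeight_le_sum_edgeWeight (hβ : 0 < β) (hμ : 0 ≤ μ) (v : V) :
    vertexWeight G β μ k ℓ v ≤
      ∑ u with G.Adj v u, edgeWeight β μ ℓ s(v, u) := by
  rw [vertexWeight_eq_sum_Ico ℓ G k (N := univ.sup ℓ) (fun u => le_sup (mem_univ u))]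
  exact sum_min_card_mul_le_sum (f := fun i : ℕ => μ * β ^ (-(i : ℤ)))
    (fun u _ => edgeLevel_mem_Ico ℓ (fun u => le_sup (mem_univ u)) v u) (fun i _ => by positivity)

lemma sum_mul_edgeWeight_le_mul_vertexWeight (hβ : 0 < β) (hμ : 0 ≤ μ) {v : V} {y : V → ℕ}
    {x : ℕ} (hy : ∀ u, G.Adj v u → y u ≤ 1)
    (hcap : ∑ u with G.Adj v u, y u ≤ k v * x) :
    ∑ u with G.Adj v u, (y u : ℝ) * edgeWeight β μ ℓ s(v, u) ≤
      x * vertexWeight G β μ k ℓ v := by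
  rw [vertexWeight_eq_sum_Ico ℓ G k (N := univ.sup ℓ) (fun u => le_sup (mem_univ u))]
  exact sum_mul_le_mul_sum_min_card (f := fun i : ℕ => μ * β ^ (-(i : ℤ)))
    (fun u _ => edgeLevel_mem_Ico ℓ (fun u => le_sup (mem_univ u)) v u) (fun i _ => by positivity)
    (fun u hu => hy u (mem_filter.1 hu).2) hcap

lemma sum_assigned_edgeWeight {A : V → V → Prop}
    (hA : ∀ u v, G.Adj u v → A u v → ℓ v = max (ℓ u) (ℓ v)) (v : V) :
    ∑ u with G.Adj v u ∧ A u v, edgeWeight β μ ℓ s(v, u) =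
      assignedCount G A v * (μ * β ^ (-(ℓ v : ℤ))) := by
  rw [assignedCount, ← nsmul_eq_mul, ← sum_const]
  refine sum_congr rfl fun u hu => ?_
  obtain ⟨hvu, huv⟩ := (mem_filter.1 hu).2
  rw [edgeWeight, edgeLevel_mk, max_comm, ← hA u v hvu.symm huv]

lemma natCeil_mul_le_of_tight {A : V → V → Prop} (hβ : 1 < β) (hμ : 0 ≤ μ)
    (hA : ∀ u v, G.Adj u v → A u v → ℓ v = max (ℓ u) (ℓ v)) {v : V} {c ε : ℝ} (hk : 0 < k v)
    (hc : 0 ≤ c) (hε : 0 < ε) (htight : c / ε < vertexWeight G β μ k ℓ v) :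
    (⌈(assignedCount G A v : ℝ) / k v⌉₊ : ℝ) * c ≤
      ε * (β / (β - 1) * ∑ u with G.Adj v u ∧ A u v, edgeWeight β μ ℓ s(v, u) +
        ∑ u with G.Adj v u, edgeWeight β μ ℓ s(v, u)) := by
  rw [sum_assigned_edgeWeight ℓ G hA v]
  exact natCeil_div_mul_le (Nat.cast_nonneg _) (by exact_mod_cast hk) hc hε htight
    (vertexWeight_le_mul_zpow ℓ G k hβ hμ v)
    (vertexWeight_le_sum_edgeWeight ℓ G k (by linarith) hμ v)

end LevelScheme

section DoubleCounting

variable {V : Type*} [Fintype V] {G : SimpleGraph V} {w : Sym2 V → ℝ} {y : V → V → ℕ}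

lemma sum_assigned_le_sum_cover {A : V → V → Prop} (hw : ∀ u v, G.Adj u v → 0 ≤ w s(u, v))
    (hA : ∀ u v, G.Adj u v → A u v → ¬ A v u)
    (hcover : ∀ u v, G.Adj u v → 1 ≤ y u v + y v u) :
    ∑ v, ∑ u with G.Adj v u ∧ A u v, w s(v, u) ≤
      ∑ v, ∑ u with G.Adj v u, (y u v : ℝ) * w s(v, u) := by
  simp only [sum_filter]
  refine sum_sum_le_of_add_swap_le fun v u => ?_
  by_cases hvu : G.Adj v u
  · have hy : (1 : ℝ) ≤ y u v + y v u := by exact_mod_cast hcover u v hvu.symm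
    have hw₀ := hw v u hvu
    have hA₁ := hA u v hvu.symm
    rw [Sym2.eq_swap (a := u)]
    simp only [hvu, hvu.symm, true_and, if_true]
    split_ifs <;> first | tauto | nlinarith
  · have huv : ¬ G.Adj u v := fun h => hvu h.symm
    simp [hvu, huv]

lemma sum_adj_le_two_mul_sum_cover (hw : ∀ u v, G.Adj u v → 0 ≤ w s(u, v))
    (hcover : ∀ u v, G.Adj u v → 1 ≤ y u v + y v u) :
    ∑ v, ∑ u with G.Adj v u, w s(v, u) ≤
      2 * ∑ v, ∑ u with G.Adj v u, (y u v : ℝ) * w s(v, u) := by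
  simp only [sum_filter, mul_sum]
  refine sum_sum_le_of_add_swap_le fun v u => ?_
  by_cases hvu : G.Adj v u
  · have hy : (1 : ℝ) ≤ y u v + y v u := by exact_mod_cast hcover u v hvu.symm
    have hw₀ := hw v u hvu
    rw [Sym2.eq_swap (a := u)]
    simp only [hvu, hvu.symm, if_true]
    nlinarith
  · have huv : ¬ G.Adj u v := fun h => hvu h.symm
    simp [hvu, huv]

end DoubleCounting

theorem tight_scheme_approximation_general {V : Type*} [Fintype V] (G : SimpleGraph V)
    (c : V → ℝ) (k : V → ℕ) (β μ ε : ℝ) (ℓ : V → ℕ) (A : V → V → Prop)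
    (hc : ∀ v, 0 < c v) (hk : ∀ v, 1 ≤ k v) (hβ : 1 < β) (hμ : ∀ v, c v < μ) (hε : 1 ≤ ε)
    -- `A` assigns each edge to exactly one of its endpoints ...
    (hA : ∀ u v, G.Adj u v → (A u v ∧ ¬ A v u) ∨ (A v u ∧ ¬ A u v))
    -- ... whose level equals the edge level
    (hAlevel : ∀ u v, G.Adj u v → A u v → ℓ v = max (ℓ u) (ℓ v))
    -- the scheme is valid
    (hvalid : ∀ v, vertexWeight G β μ k ℓ v ≤ c v)
    -- and `ε`-tight
    (htight : ∀ v, 0 < assignedCount G A v → c v / ε < vertexWeight G β μ k ℓ v)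
    -- feasible integral capacitated vertex cover (x, y)
    (x : V → ℕ) (y : V → V → ℕ)
    (hy01 : ∀ u v, G.Adj u v → y u v ≤ 1)
    (hcover : ∀ u v, G.Adj u v → 1 ≤ y u v + y v u)
    (hcap : ∀ v, ∑ u ∈ Finset.univ.filter (fun u => G.Adj v u), y u v ≤ k v * x v) :
    ∑ v ∈ Finset.univ.filter (fun v => 0 < assignedCount G A v),
        (⌈(assignedCount G A v : ℝ) / (k v : ℝ)⌉₊ : ℝ) * c v
      ≤ ε * (2 * β / (β - 1) + 1) * ∑ v, c v * (x v : ℝ) := by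
  have hβ₀ : 0 < β := by linarith
  have hμ₀ : ∀ v, 0 ≤ μ := fun v => ((hc v).trans (hμ v)).le
  have hw : ∀ u v, G.Adj u v → 0 ≤ edgeWeight β μ ℓ s(u, v) :=
    fun u _ _ => edgeWeight_nonneg ℓ hβ₀ (hμ₀ u) _
  set B := β / (β - 1)
  set P := fun v => ∑ u with G.Adj v u ∧ A u v, edgeWeight β μ ℓ s(v, u)
  set Q := fun v => ∑ u with G.Adj v u, edgeWeight β μ ℓ s(v, u)
  set Y := ∑ v, ∑ u with G.Adj v u, (y u v : ℝ) * edgeWeight β μ ℓ s(v, u)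
  have hP₀ : ∀ v, 0 ≤ P v := fun v => sum_nonneg fun u hu => hw v u (mem_filter.1 hu).2.1
  have hQ₀ : ∀ v, 0 ≤ Q v := fun v => sum_nonneg fun u hu => hw v u (mem_filter.1 hu).2
  have hB : 1 ≤ B := by rw [le_div_iff₀ (by linarith)]; linarith
  have hvertex : ∀ v ∈ univ.filter fun v => 0 < assignedCount G A v,
      (⌈(assignedCount G A v : ℝ) / (k v : ℝ)⌉₊ : ℝ) * c v ≤ ε * (B * P v + Q v) :=
    fun v hv => natCeil_mul_le_of_tight ℓ G k hβ (hμ₀ v) hAlevel (hk v) (hc v).le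
      (by linarith) (htight v (mem_filter.1 hv).2)
  have hP : ∑ v, P v ≤ Y := sum_assigned_le_sum_cover hw
    (fun u v h huv hvu => by rcases hA u v h with ⟨-, h'⟩ | ⟨-, h'⟩ <;> contradiction) hcover
  have hQ : ∑ v, Q v ≤ 2 * Y := sum_adj_le_two_mul_sum_cover hw hcover
  have hY : Y ≤ ∑ v, c v * x v := sum_le_sum fun v _ =>
    (sum_mul_edgeWeight_le_mul_vertexWeight ℓ G k hβ₀ (hμ₀ v) (fun u h => hy01 u v h.symm)
      (hcap v)).trans (by rw [mul_comm]; gcongr; exact hvalid v)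
  calc _ ≤ ∑ v ∈ univ.filter fun v => 0 < assignedCount G A v, ε * (B * P v + Q v) :=
        sum_le_sum hvertex
    _ ≤ ∑ v, ε * (B * P v + Q v) := sum_le_sum_of_subset_of_nonneg (filter_subset _ _)
        fun v _ _ => by have := hP₀ v; have := hQ₀ v; positivity
    _ = ε * (B * ∑ v, P v + ∑ v, Q v) := by rw [← mul_sum, sum_add_distrib, ← mul_sum]
    _ ≤ ε * (2 * β / (β - 1) + 1) * ∑ v, c v * (x v : ℝ) := by
        have : 0 ≤ Y := by linarith [sum_nonneg fun v (_ : v ∈ univ) => hQ₀ v]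
        rw [mul_assoc, mul_div_assoc]
        gcongr
        nlinarith

/-- Given an `ε`-tight valid level scheme with consistent edge assignment `δ`, selecting
`⌈|δ(v)|/k_v⌉` copies of each vertex with `δ(v) ≠ ∅` yields an
`ε·(2β/(β − 1) + 1)`-approximate weighted minimum capacitated vertex cover: its cost is at most
`ε·(2β/(β − 1) + 1)·Σ_{v ∈ V} c_v·x_v` for every feasible integral capacitated vertex cover
`(x, y)`. Here `y u v` denotes the coverage `y_{ev}` of the edge `e = {u,v}` by `v`. -/
theorem tight_scheme_approximation {V : Type*} [Fintype V] (G : SimpleGraph V)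
    (c : V → ℝ) (k : V → ℕ) (β μ ε : ℝ) (ℓ : V → ℕ) (A : V → V → Prop)
    (hc : ∀ v, 0 < c v) (hk : ∀ v, 1 ≤ k v) (hβ : 1 < β) (hμ : ∀ v, c v < μ) (hε : 1 ≤ ε)
    -- `A` assigns each edge to exactly one of its endpoints ...
    (hA : ∀ u v, G.Adj u v → (A u v ∧ ¬ A v u) ∨ (A v u ∧ ¬ A u v))
    -- ... whose level equals the edge level
    (hAlevel : ∀ u v, G.Adj u v → A u v → ℓ v = max (ℓ u) (ℓ v))
    -- the scheme is valid
    (hvalid : ∀ v, vertexWeight G β μ k ℓ v ≤ c v)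
    -- and `ε`-tight
    (htight : ∀ v, 0 < assignedCount G A v → c v / ε < vertexWeight G β μ k ℓ v)
    -- feasible integral capacitated vertex cover (x, y)
    (x : V → ℕ) (y : V → V → ℕ)
    (hy01 : ∀ u v, G.Adj u v → y u v ≤ 1)
    (hcover : ∀ u v, G.Adj u v → 1 ≤ y u v + y v u)
    (hcap : ∀ v, ∑ u ∈ Finset.univ.filter (fun u => G.Adj v u), y u v ≤ k v * x v)
    (hyx : ∀ u v, G.Adj u v → y u v ≤ x v) :
    ∑ v ∈ Finset.univ.filter (fun v => 0 < assignedCount G A v),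
        (⌈(assignedCount G A v : ℝ) / (k v : ℝ)⌉₊ : ℝ) * c v
      ≤ ε * (2 * β / (β - 1) + 1) * ∑ v, c v * (x v : ℝ) :=
  tight_scheme_approximation_general G c k β μ ε ℓ A hc hk hβ hμ hε hA hAlevel hvalid htight x y
    hy01 hcover hcap
end
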